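/- Let β > 0, η ∈ [0,1), and let (s_n)_{n≥0}, (w_n)_{n≥0} be sequences in ℝ^M with s_{n+1} = s_n + γ_n·(w_n − s_n) for stepsizes γ_n ≥ 0; write Δs_n = γ_n·(w_n − s_n) and assume β·Δs_n(j) ≤ 1 for all n and all arms j. Then for every K ≥ 0 and every arm j: β·s_0(j) + Σ_{n=0}^K β·Δs_n(j) − ln(Σ_{k=1}^M exp(β·s_0(k))) ≤ Σ_{n=0}^K [ (β/(1−η))·(σ(s_n) − (η/M)·𝟙)·Δs_n + ((e−2)β²/(1−η))·σ(s_n)·(Δs_n)² ], where · denotes the Euclidean inner product on ℝ^M, 𝟙 is the all-ones vector in ℝ^M, (Δs_n)² is the vector of componentwise squares of Δs_n, and e is Euler's number. -/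

import Mathlib

/-!
The potential `Φₙ = log ∑ₖ exp (β sₙ(k))` dominates `β sₙ(j)` for every arm `j`. Since
`exp x ≤ 1 + x + (e - 2) x²` for `x ≤ 1` and `log t ≤ t - 1`, one step raises `Φ` by at most the
softmax average of `β Δsₙ + (e - 2) (β Δsₙ)²`; the softmax weights are the Hedge weights with the
uniform exploration `η / M` removed, rescaled by `1 / (1 - η)`. Summing the steps telescopes.
-/

open Finset

noncomputable def hedge (β η : ℝ) {M : ℕ} (s : Fin M → ℝ) (j : Fin M) : ℝ :=
  (1 - η) * Real.exp (β * s j) / (∑ k, Real.exp (β * s k)) + η / M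

open scoped Nat

namespace Real

theorem exp_le_quadratic_of_nonpos {x : ℝ} (hx : x ≤ 0) : exp x ≤ 1 + x + x ^ 2 / 2 := by
  have hderiv (y : ℝ) : HasDerivAt (fun y => 1 + y + y ^ 2 / 2 - exp y) (1 + y - exp y) y := by
    have := (((hasDerivAt_id' y).const_add 1).add ((hasDerivAt_pow 2 y).div_const 2)).sub
      (hasDerivAt_exp y)
    exact this.congr_deriv (by ring)
  have hanti : Antitone fun y => 1 + y + y ^ 2 / 2 - exp y :=
    antitone_of_hasDerivAt_nonpos (f' := fun y => 1 + y - exp y) hderiv fun y => by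
      simpa [add_comm] using add_one_le_exp y
  simpa using hanti hx

theorem exp_le_quadratic_of_mem_Icc {x : ℝ} (hx₀ : 0 ≤ x) (hx₁ : x ≤ 1) :
    exp x ≤ 1 + x + (exp 1 - 2) * x ^ 2 := by
  have tail (y : ℝ) : HasSum (fun n => y ^ (n + 2) / (n + 2)!) (exp y - 1 - y) := by
    have := (hasSum_nat_add_iff' 2).mpr (NormedSpace.expSeries_div_hasSum_exp y)
    rw [← exp_eq_exp_ℝ] at this
    simpa [sum_range_succ, sub_sub] using this
  -- compare the tails of the series for `exp x` and `x² · exp 1` termwise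
  have hle := hasSum_le (fun n => ?_) (tail x) ((tail 1).mul_left (x ^ 2))
  · linarith
  · rw [one_pow, pow_add, ← mul_div_assoc, mul_one, mul_comm]
    gcongr
    exact mul_le_of_le_one_right (sq_nonneg x) (pow_le_one₀ hx₀ hx₁)

theorem exp_le_quadratic_of_le_one {x : ℝ} (hx : x ≤ 1) :
    exp x ≤ 1 + x + (exp 1 - 2) * x ^ 2 := by
  rcases le_total x 0 with hx₀ | hx₀
  · have : (1 / 2 : ℝ) ≤ exp 1 - 2 := by linarith [exp_one_gt_d9]
    nlinarith [exp_le_quadratic_of_nonpos hx₀, sq_nonneg x]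
  · exact exp_le_quadratic_of_mem_Icc hx₀ hx

end Real

open Real

noncomputable def softmax {ι : Type*} [Fintype ι] (a : ι → ℝ) (i : ι) : ℝ :=
  exp (a i) / ∑ k, exp (a k)

section Softmax

variable {ι : Type*} [Fintype ι]

theorem softmax_nonneg (a : ι → ℝ) (i : ι) : 0 ≤ softmax a i := by
  unfold softmax; positivity

theorem sum_softmax_eq_one [Nonempty ι] (a : ι → ℝ) : ∑ i, softmax a i = 1 := by
  simp only [softmax, ← sum_div]
  exact div_self (sum_pos (fun i _ => exp_pos (a i)) univ_nonempty).ne'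

theorem le_log_sum_exp (a : ι → ℝ) (i : ι) : a i ≤ log (∑ k, exp (a k)) := by
  rw [← log_exp (a i)]
  exact log_le_log (exp_pos _) (single_le_sum (fun k _ => (exp_pos (a k)).le) (mem_univ i))

theorem log_sum_exp_add_le [Nonempty ι] (a d : ι → ℝ) (hd : ∀ i, d i ≤ 1) :
    log (∑ i, exp (a i + d i)) ≤
      log (∑ i, exp (a i)) + ∑ i, softmax a i * (d i + (exp 1 - 2) * d i ^ 2) := by
  have hS : 0 < ∑ i, exp (a i) := sum_pos (fun i _ => exp_pos (a i)) univ_nonempty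
  have hratio : (∑ i, exp (a i + d i)) / ∑ i, exp (a i) = ∑ i, softmax a i * exp (d i) := by
    simp only [softmax, sum_div, exp_add, div_mul_eq_mul_div]
  calc log (∑ i, exp (a i + d i))
      = log (∑ i, exp (a i)) + log (∑ i, softmax a i * exp (d i)) := by
        rw [← hratio, log_div (by positivity) hS.ne']; ring
    _ ≤ log (∑ i, exp (a i)) + ((∑ i, softmax a i * exp (d i)) - 1) := by
        gcongr
        exact log_le_sub_one_of_pos (by rw [← hratio]; positivity)
    _ = log (∑ i, exp (a i)) + ∑ i, softmax a i * (exp (d i) - 1) := by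
        simp only [mul_sub, mul_one, sum_sub_distrib, sum_softmax_eq_one]
    _ ≤ log (∑ i, exp (a i)) + ∑ i, softmax a i * (d i + (exp 1 - 2) * d i ^ 2) := by
        gcongr with i
        · exact softmax_nonneg a i
        · linarith [exp_le_quadratic_of_le_one (hd i)]

end Softmax

section Hedge

variable {M : ℕ} {β η : ℝ}

theorem hedge_sub_eq_mul_softmax (s : Fin M → ℝ) (k : Fin M) :
    hedge β η s k - η / M = (1 - η) * softmax (fun k => β * s k) k := by
  simp only [hedge, softmax]; ring

theorem mul_softmax_le_hedge (hη : 0 ≤ η) (s : Fin M → ℝ) (k : Fin M) :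
    (1 - η) * softmax (fun k => β * s k) k ≤ hedge β η s k := by
  rw [← hedge_sub_eq_mul_softmax]
  linarith [div_nonneg hη (Nat.cast_nonneg (α := ℝ) M)]

theorem sum_softmax_mul_le_hedge (hη0 : 0 ≤ η) (hη1 : η < 1) (s Δ : Fin M → ℝ) :
    ∑ k, softmax (fun k => β * s k) k * (β * Δ k + (exp 1 - 2) * (β * Δ k) ^ 2) ≤
      (β / (1 - η)) * ∑ k, (hedge β η s k - η / M) * Δ k
        + ((exp 1 - 2) * β ^ 2 / (1 - η)) * ∑ k, hedge β η s k * Δ k ^ 2 := by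
  have hη : 0 < 1 - η := by linarith
  have hc : 0 ≤ (exp 1 - 2) * β ^ 2 := mul_nonneg (by linarith [exp_one_gt_d9]) (sq_nonneg β)
  rw [mul_sum, mul_sum, ← sum_add_distrib]
  gcongr with k
  rw [hedge_sub_eq_mul_softmax]
  set p := softmax (fun k => β * s k) k
  have hlin : β / (1 - η) * ((1 - η) * p * Δ k) = p * (β * Δ k) := by
    field_simp
  have hquad : p * ((exp 1 - 2) * (β * Δ k) ^ 2) ≤
      (exp 1 - 2) * β ^ 2 / (1 - η) * (hedge β η s k * Δ k ^ 2) := by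
    rw [div_mul_eq_mul_div, le_div_iff₀ hη]
    calc p * ((exp 1 - 2) * (β * Δ k) ^ 2) * (1 - η)
        = (exp 1 - 2) * β ^ 2 * Δ k ^ 2 * ((1 - η) * p) := by ring
      _ ≤ (exp 1 - 2) * β ^ 2 * Δ k ^ 2 * hedge β η s k := by
        gcongr; exact mul_softmax_le_hedge hη0 s k
      _ = (exp 1 - 2) * β ^ 2 * (hedge β η s k * Δ k ^ 2) := by ring
  linarith

theorem log_sum_exp_step_le_hedge [Nonempty (Fin M)] (hη0 : 0 ≤ η) (hη1 : η < 1)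
    (s Δ : Fin M → ℝ) (hΔ : ∀ k, β * Δ k ≤ 1) :
    log (∑ k, exp (β * (s k + Δ k))) - log (∑ k, exp (β * s k)) ≤
      (β / (1 - η)) * ∑ k, (hedge β η s k - η / M) * Δ k
        + ((exp 1 - 2) * β ^ 2 / (1 - η)) * ∑ k, hedge β η s k * Δ k ^ 2 := by
  have := log_sum_exp_add_le (fun k => β * s k) (fun k => β * Δ k) hΔ
  simp only [mul_add]
  linarith [sum_softmax_mul_le_hedge (β := β) hη0 hη1 s Δ]

end Hedge

theorem cumulative_state_change_general {M : ℕ}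
    (β η : ℝ) (hη0 : 0 ≤ η) (hη1 : η < 1)
    (s w : ℕ → Fin M → ℝ) (γ : ℕ → ℝ)
    (hrec : ∀ n, s (n + 1) = fun j => s n j + γ n * (w n j - s n j))
    (hΔ : ∀ n (j : Fin M), β * (γ n * (w n j - s n j)) ≤ 1) :
    ∀ (K : ℕ) (j : Fin M),
      β * s 0 j + (∑ n ∈ Finset.range (K + 1), β * (γ n * (w n j - s n j)))
          - Real.log (∑ k, Real.exp (β * s 0 k))
        ≤ ∑ n ∈ Finset.range (K + 1),
            ((β / (1 - η)) *
              (∑ k, (hedge β η (s n) k - η / M) * (γ n * (w n k - s n k)))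
            + ((Real.exp 1 - 2) * β ^ 2 / (1 - η)) *
              (∑ k, hedge β η (s n) k * (γ n * (w n k - s n k)) ^ 2)) := by
  intro K j
  have : Nonempty (Fin M) := ⟨j⟩
  set L : ℕ → ℝ := fun n => log (∑ k, exp (β * s n k))
  have hdrift :
      ∑ n ∈ range (K + 1), β * (γ n * (w n j - s n j)) = β * s (K + 1) j - β * s 0 j := by
    rw [← sum_range_sub (fun n => β * s n j)]
    refine sum_congr rfl fun n _ => ?_
    rw [hrec]; ring
  calc _ = β * s (K + 1) j - L 0 := by rw [hdrift]; ring
    _ ≤ L (K + 1) - L 0 := by gcongr; exact le_log_sum_exp (fun k => β * s (K + 1) k) j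
    _ = ∑ n ∈ range (K + 1), (L (n + 1) - L n) := (sum_range_sub L _).symm
    _ ≤ _ := sum_le_sum fun n _ => by
      simpa only [L, hrec n] using
        log_sum_exp_step_le_hedge hη0 hη1 (s n) (fun k => γ n * (w n k - s n k)) (hΔ n)

/-- Theorem 5 of the paper: the cumulative state change bound. For the
iteration `s_{n+1} = s_n + γ_n (w_n − s_n)` with `Δs_n = γ_n (w_n − s_n)` and
`β·Δs_n(j) ≤ 1`, for every `K` and arm `j`,
`β s_0(j) + Σ_{n=0}^K β Δs_n(j) − ln Σ_k exp(β s_0(k))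
  ≤ Σ_{n=0}^K [ (β/(1−η))·(σ(s_n) − (η/M)𝟙)·Δs_n
              + ((e−2)β²/(1−η))·σ(s_n)·(Δs_n)² ]`. -/
theorem cumulative_state_change {M : ℕ} (hM : 1 ≤ M)
    (β η : ℝ) (hβ : 0 < β) (hη0 : 0 ≤ η) (hη1 : η < 1)
    (s w : ℕ → Fin M → ℝ) (γ : ℕ → ℝ) (hγ : ∀ n, 0 ≤ γ n)
    (hrec : ∀ n, s (n + 1) = fun j => s n j + γ n * (w n j - s n j))
    (hΔ : ∀ n (j : Fin M), β * (γ n * (w n j - s n j)) ≤ 1) :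
    ∀ (K : ℕ) (j : Fin M),
      β * s 0 j + (∑ n ∈ Finset.range (K + 1), β * (γ n * (w n j - s n j)))
          - Real.log (∑ k, Real.exp (β * s 0 k))
        ≤ ∑ n ∈ Finset.range (K + 1),
            ((β / (1 - η)) *
              (∑ k, (hedge β η (s n) k - η / M) * (γ n * (w n k - s n k)))
            + ((Real.exp 1 - 2) * β ^ 2 / (1 - η)) *
              (∑ k, hedge β η (s n) k * (γ n * (w n k - s n k)) ^ 2)) :=
  cumulative_state_change_general β η hη0 hη1 s w γ hrec hΔ
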